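/- arXiv:2412.19364 — 6 statements merged into one kernel-verified Lean document; each statement's English description precedes it below -/
import Mathlib

section
/- Let $R = K[x_0, \ldots, x_n, y_0, \ldots, y_{n+1}]$ over a field $K$, and suppose $n \equiv 2 \pmod 3$ with $k = (2n+2)/3$. Let $M_k$ be the square $(k+1) \times (k+1)$ catalecticant-type matrix with columns $(x_j, x_{j+1}, \ldots, x_{j+k})^T$ for $0 \leq j \leq n-k$ and $(y_j, \ldots, y_{j+k})^T$ for $0 \leq j \leq n-k+1$. Then every partial derivative of $\det(M_k)$ of order $d$ (with respect to any of the variables $x_i, y_j$) is a $K$-linear combination of $(k+1-d) \times (k+1-d)$ minors of $M_k$. -/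
/-!
Every entry of `M` is a single variable, so differentiating an `m × m` minor column by column
(the Leibniz rule for determinants) replaces one column by a column of constants `0`/`1`;
expanding along that column writes the derivative as a `K`-linear combination of
`(m - 1) × (m - 1)` minors. Iterating `d` times gives the claim.
-/

open MvPolynomial

namespace Derivation

variable {R A M : Type*} [CommSemiring R] [CommSemiring A] [Algebra R A] [AddCommMonoid M]
  [Module A M] [Module R M] (D : Derivation R A M)

theorem leibniz_finset_prod {ι : Type*} [DecidableEq ι] (s : Finset ι) (f : ι → A) :
    D (∏ i ∈ s, f i) = ∑ i ∈ s, (∏ j ∈ s.erase i, f j) • D (f i) := by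
  induction s using Finset.induction_on with
  | empty => simp
  | @insert a s ha ih =>
    rw [Finset.prod_insert ha, leibniz, ih, Finset.sum_insert ha, Finset.erase_insert ha,
      Finset.smul_sum, add_comm]
    congr 1
    refine Finset.sum_congr rfl fun i hi => ?_
    rw [Finset.erase_insert_of_ne (ne_of_mem_of_not_mem hi ha).symm,
      Finset.prod_insert fun h => ha (Finset.mem_of_mem_erase h), smul_smul]

end Derivation

theorem Derivation.map_det {R A n : Type*} [CommSemiring R] [CommRing A] [Algebra R A]
    [Fintype n] [DecidableEq n] (D : Derivation R A A) (N : Matrix n n A) :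
    D N.det = ∑ j, (N.updateCol j fun i => D (N i j)).det := by
  simp only [Matrix.det_apply, map_sum, Units.smul_def, map_zsmul, D.leibniz_finset_prod,
    Finset.smul_sum]
  rw [Finset.sum_comm]
  refine Finset.sum_congr rfl fun j _ => Finset.sum_congr rfl fun τ _ => ?_
  congr 1
  rw [← Finset.mul_prod_erase Finset.univ _ (Finset.mem_univ j), Matrix.updateCol_self,
    smul_eq_mul, mul_comm]
  exact congrArg _ <| Finset.prod_congr rfl fun i hi =>
    (Matrix.updateCol_ne (Finset.ne_of_mem_erase hi)).symm

namespace Matrix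

variable {R σ : Type*} [CommRing R] {a b : ℕ} (M : Matrix (Fin a) (Fin b) (MvPolynomial σ R))

def minors (m : ℕ) : Set (MvPolynomial σ R) :=
  {p | ∃ (r : Fin m → Fin a) (c : Fin m → Fin b), StrictMono r ∧ StrictMono c ∧
    p = (M.submatrix r c).det}

theorem det_mem_span_minors (M : Matrix (Fin a) (Fin a) (MvPolynomial σ R)) :
    M.det ∈ Submodule.span R (M.minors a) :=
  Submodule.subset_span ⟨id, id, strictMono_id, strictMono_id, by simp⟩

theorem det_updateCol_C_mem_span_minors {m : ℕ} {r : Fin (m + 1) → Fin a}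
    {c : Fin (m + 1) → Fin b} (hr : StrictMono r) (hc : StrictMono c) (j : Fin (m + 1))
    (w : Fin (m + 1) → R) :
    ((M.submatrix r c).updateCol j fun i => C (w i)).det ∈ Submodule.span R (M.minors m) := by
  rw [det_succ_column _ j]
  refine Submodule.sum_mem _ fun i _ => ?_
  rw [submatrix_updateCol_succAbove, updateCol_self, submatrix_submatrix]
  have hterm : ∀ q : MvPolynomial σ R, (-1) ^ (i + j : ℕ) * C (w i) * q =
      ((-1) ^ (i + j : ℕ) * w i) • q := fun q => by
    rw [smul_eq_C_mul, C_mul, C_pow, C_neg, C_1]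
  rw [hterm]
  exact Submodule.smul_mem _ _ <| Submodule.subset_span
    ⟨_, _, hr.comp (Fin.strictMono_succAbove i), hc.comp (Fin.strictMono_succAbove j), rfl⟩

variable {M}

theorem pderiv_mem_span_minors (hM : ∀ i j, ∃ u, M i j = X u) (v : σ) {m : ℕ}
    {p : MvPolynomial σ R} (hp : p ∈ Submodule.span R (M.minors m)) :
    pderiv v p ∈ Submodule.span R (M.minors (m - 1)) := by
  classical
  choose u hu using hM
  suffices Submodule.span R (M.minors m) ≤
      (Submodule.span R (M.minors (m - 1))).comap (pderiv v).toLinearMap from this hp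
  rw [Submodule.span_le]
  rintro _ ⟨r, c, hr, hc, rfl⟩
  cases m with
  | zero => simp
  | succ m =>
    rw [SetLike.mem_coe, Submodule.mem_comap, Derivation.coeFn_coe,
      Derivation.map_det]
    refine Submodule.sum_mem _ fun j _ => ?_
    have hcol : (fun i => pderiv v (M.submatrix r c i j)) =
        fun i => C (Pi.single (M := fun _ => R) v 1 (u (r i) (c j))) := by
      ext1 i
      rw [submatrix_apply, hu, pderiv_X, Pi.single_apply, Pi.single_apply, apply_ite C, C_1, C_0]
    rw [hcol]
    exact M.det_updateCol_C_mem_span_minors hr hc j _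

theorem foldl_pderiv_mem_span_minors (hM : ∀ i j, ∃ u, M i j = X u) (l : List σ) {m : ℕ}
    {p : MvPolynomial σ R} (hp : p ∈ Submodule.span R (M.minors m)) :
    l.foldl (fun p v => pderiv v p) p ∈ Submodule.span R (M.minors (m - l.length)) := by
  induction l generalizing m p with
  | nil => exact hp
  | cons v l ih =>
    rw [List.foldl_cons, List.length_cons, Nat.sub_add_eq, Nat.sub_right_comm]
    exact ih (pderiv_mem_span_minors hM v hp)

end Matrix

theorem stmt4_general (K : Type*) [Field K] (n k : ℕ)
    (M : Matrix (Fin (k+1)) (Fin (k+1)) (MvPolynomial (ℕ ⊕ ℕ) K))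
    (hM : ∀ i j : Fin (k+1), M i j =
      if (j : ℕ) ≤ n - k then X (Sum.inl ((j : ℕ) + (i : ℕ)))
      else X (Sum.inr ((j : ℕ) - (n - k + 1) + (i : ℕ))))
    (d : ℕ) (vs : Fin d → (ℕ ⊕ ℕ)) :
    (List.ofFn vs).foldl (fun p v => pderiv v p) M.det ∈
      Submodule.span K
        {p : MvPolynomial (ℕ ⊕ ℕ) K |
          ∃ r c : Fin (k + 1 - d) → Fin (k+1), StrictMono r ∧ StrictMono c ∧
            p = (M.submatrix r c).det} := by
  have hX : ∀ i j, ∃ u, M i j = X u := fun i j => by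
    rw [hM i j]
    split_ifs <;> exact ⟨_, rfl⟩
  have h := Matrix.foldl_pderiv_mem_span_minors hX (List.ofFn vs) M.det_mem_span_minors
  rwa [List.length_ofFn] at h

theorem stmt4 (K : Type*) [Field K] (n k : ℕ) (hn : n % 3 = 2) (hk : 3 * k = 2 * n + 2)
    (M : Matrix (Fin (k+1)) (Fin (k+1)) (MvPolynomial (ℕ ⊕ ℕ) K))
    (hM : ∀ i j : Fin (k+1), M i j =
      if (j : ℕ) ≤ n - k then X (Sum.inl ((j : ℕ) + (i : ℕ)))
      else X (Sum.inr ((j : ℕ) - (n - k + 1) + (i : ℕ))))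
    (d : ℕ) (vs : Fin d → (ℕ ⊕ ℕ)) :
    (List.ofFn vs).foldl (fun p v => pderiv v p) M.det ∈
      Submodule.span K
        {p : MvPolynomial (ℕ ⊕ ℕ) K |
          ∃ r c : Fin (k + 1 - d) → Fin (k+1), StrictMono r ∧ StrictMono c ∧
            p = (M.submatrix r c).det} :=
  stmt4_general K n k M hM d vs
end

section
/- Let $n \geq 2$ and let $D = d_1 H_1 + d_2 H_2 - \sum_{i=1}^{n+2} m_i E_i$ be a divisor class on the blowup $X^{n,n+1}_{n+2}$ of $\mathbb{P}^n \times \mathbb{P}^{n+1}$ at $n+2$ general points, with $d_1, d_2, m_i \in \mathbb{Z}$. Suppose $D$ satisfies: (I0) $d_1, d_2 \geq 0$; (I1) $d_1 + d_2 \geq m_i$ for all $i$; (I2) $n d_1 + (n+1) d_2 \geq \sum_{i \in I} m_i$ for every $I \subseteq \{1, \ldots, n+2\}$ with $|I| \in \{n+1, n+2\}$. Then $D$ is a nonnegative integer linear combination of the classes $E_i$, $H_1 - \sum_{i \in I} E_i$ with $|I| = n$, and $H_2 - \sum_{i \in J} E_i$ with $|J| = n+1$. -/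
/-!
Put `r i = d1 + d2 - m i`, which is `≥ 0` by (I1). The complements of the sets `I` and `J` are
pairs and singletons, so the claim asks for `d1` pairs and `d2` singletons in `Fin (n+2)` such
that every `i` lies in at most `r i` of them, counted with multiplicity; the coefficients of the
`E_i` absorb the slack. Condition (I2) for `|I| = n+2` says `2 d1 + d2 ≤ ∑ r`, and for
`|I| = n+1` that `d1 ≤ ∑_{i ≠ j} r i` for every `j`.

Both families come from one greedy statement: a family of `d` sets of size `k` whose degrees are
bounded by `r` exists as soon as `k d ≤ ∑ min (r i) d`. Pick a `k`-set `T` of points of positive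
capacity that either contains every point of capacity `> d` or consists of such points; lowering
the capacities on `T` by one preserves the inequality with `d - 1`.
-/

open Finset

section MultiDegree

variable {α : Type*} [Fintype α] [DecidableEq α]

/-- `e J` is the multiplicity of `J` in a multiset of subsets of `α`. -/
def multiDegree (e : Finset α → ℕ) (i : α) : ℕ := ∑ J, if i ∈ J then e J else 0

lemma multiDegree_add_single (e : Finset α → ℕ) (T : Finset α) (i : α) :
    multiDegree (e + Pi.single T 1) i = multiDegree e i + if i ∈ T then 1 else 0 := by
  simp only [multiDegree, Pi.add_apply, ite_add_zero, sum_add_distrib]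
  congr 1
  rw [Fintype.sum_eq_single T fun J hJ => by simp [hJ]]
  simp

lemma sum_multiDegree {k : ℕ} {e : Finset α → ℕ} (he : ∀ J, e J ≠ 0 → #J = k) :
    ∑ i, multiDegree e i = k * ∑ J, e J := by
  simp only [multiDegree]
  rw [sum_comm, mul_sum]
  refine sum_congr rfl fun J _ => ?_
  rw [sum_ite_mem, univ_inter, sum_const, smul_eq_mul]
  by_cases hJ : e J = 0
  · simp [hJ]
  · rw [he J hJ]

lemma sum_comp_compl (e : Finset α → ℕ) : ∑ I, (e ∘ compl) I = ∑ J, e J :=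
  Equiv.sum_comp (compl_involutive.toPerm _) e

lemma multiDegree_comp_compl (e : Finset α → ℕ) (i : α) :
    multiDegree (e ∘ compl) i + multiDegree e i = ∑ J, e J := by
  have h : multiDegree (e ∘ compl) i = ∑ J, if i ∉ J then e J else 0 := by
    rw [multiDegree, ← Equiv.sum_comp (compl_involutive.toPerm _)]
    simp
  rw [h, multiDegree, ← sum_add_distrib]
  exact sum_congr rfl fun J _ => by by_cases hi : i ∈ J <;> simp [hi]

lemma card_eq_of_comp_compl_ne_zero {k : ℕ} {e : Finset α → ℕ} (he : ∀ J, e J ≠ 0 → #J = k)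
    (I : Finset α) (hI : (e ∘ compl) I ≠ 0) : #I = Fintype.card α - k := by
  have := he _ hI
  rw [card_compl] at this
  have := card_le_univ I
  omega

end MultiDegree

lemma le_sum_min_of_le_sum {ι : Type*} (s : Finset ι) (f : ι → ℕ) {d : ℕ}
    (h : d ≤ ∑ i ∈ s, f i) : d ≤ ∑ i ∈ s, min (f i) d := by
  by_cases hs : ∃ i ∈ s, d ≤ f i
  · obtain ⟨i, hi, hdi⟩ := hs
    calc d = min (f i) d := (min_eq_right hdi).symm
      _ ≤ ∑ i ∈ s, min (f i) d :=
        single_le_sum (f := fun i => min (f i) d) (fun _ _ => Nat.zero_le _) hi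
  · push Not at hs
    rwa [sum_congr rfl fun i hi => min_eq_left (hs i hi).le]

lemma Finset.exists_card_eq_subset_or_superset {α : Type*} {P Q : Finset α} {k : ℕ} (hPQ : P ⊆ Q)
    (hk : k ≤ #Q) : ∃ T ⊆ Q, #T = k ∧ (P ⊆ T ∨ T ⊆ P) := by
  rcases le_total k #P with hkP | hPk
  · obtain ⟨T, hTP, hT⟩ := exists_subset_card_eq hkP
    exact ⟨T, hTP.trans hPQ, hT, .inr hTP⟩
  · obtain ⟨T, hPT, hTQ, hT⟩ := exists_subsuperset_card_eq hPQ hPk hk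
    exact ⟨T, hTQ, hT, .inl hPT⟩

section Greedy

variable {α : Type*} [Fintype α] [DecidableEq α] {k d : ℕ} {r : α → ℕ}

omit [DecidableEq α] in
lemma le_card_pos_of_mul_le_sum_min (h : k * (d + 1) ≤ ∑ i, min (r i) (d + 1)) :
    k ≤ #{i | 0 < r i} := by
  refine Nat.le_of_mul_le_mul_right ?_ d.succ_pos
  calc k * (d + 1) ≤ ∑ i, min (r i) (d + 1) := h
    _ = ∑ i with 0 < r i, min (r i) (d + 1) := (sum_filter_of_ne fun i _ hi => by omega).symm
    _ ≤ #{i | 0 < r i} * (d + 1) := by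
      simpa using sum_le_card_nsmul _ _ _ fun i _ => min_le_right (r i) (d + 1)

lemma mul_le_sum_min_pred {T : Finset α} (hT : #T = k) (hT_pos : ∀ t ∈ T, 0 < r t)
    (hT_sat : ({i | d + 1 ≤ r i} : Finset α) ⊆ T ∨ T ⊆ ({i | d + 1 ≤ r i} : Finset α))
    (h : k * (d + 1) ≤ ∑ i, min (r i) (d + 1)) :
    k * d ≤ ∑ i, min (if i ∈ T then r i - 1 else r i) d := by
  rcases hT_sat with hPT | hTP
  · have hterm : ∀ i, min (if i ∈ T then r i - 1 else r i) d + (if i ∈ T then 1 else 0)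
        = min (r i) (d + 1) := by
      intro i
      by_cases hi : i ∈ T
      · have := hT_pos i hi
        simp only [hi, if_true]
        omega
      · have : r i < d + 1 := by
          by_contra h'
          exact hi (hPT (mem_filter.mpr ⟨mem_univ i, by omega⟩))
        simp only [hi, if_false]
        omega
    have := sum_congr rfl fun i (_ : i ∈ univ) => hterm i
    rw [sum_add_distrib, sum_boole, Nat.cast_id, filter_mem_eq_inter, univ_inter, hT] at this
    rw [mul_add, mul_one] at h
    omega
  · calc k * d = ∑ i ∈ T, min (if i ∈ T then r i - 1 else r i) d := by
          rw [sum_congr rfl fun i hi => ?_, sum_const, hT, smul_eq_mul]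
          have := mem_filter.mp (hTP hi)
          simp only [hi, if_true]
          omega
      _ ≤ ∑ i, min (if i ∈ T then r i - 1 else r i) d :=
          sum_le_univ_sum_of_nonneg fun _ => Nat.zero_le _

theorem exists_uniform_multiDegree_le (h : k * d ≤ ∑ i, min (r i) d) :
    ∃ e : Finset α → ℕ, (∀ J, e J ≠ 0 → #J = k) ∧ ∑ J, e J = d ∧ ∀ i, multiDegree e i ≤ r i := by
  induction d generalizing r with
  | zero => exact ⟨0, by simp, by simp, fun i => by simp [multiDegree]⟩
  | succ d ih =>
    obtain ⟨T, hTQ, hT, hT_sat⟩ := exists_card_eq_subset_or_superset (P := {i | d + 1 ≤ r i})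
      (fun i hi => by simp only [mem_filter, mem_univ, true_and] at hi ⊢; omega)
      (le_card_pos_of_mul_le_sum_min h)
    have hT_pos : ∀ t ∈ T, 0 < r t := fun t ht => (mem_filter.mp (hTQ ht)).2
    obtain ⟨e, he, he_sum, he_deg⟩ := ih (mul_le_sum_min_pred hT hT_pos hT_sat h)
    refine ⟨e + Pi.single T 1, fun J hJ => ?_, ?_, fun i => ?_⟩
    · by_cases hJT : J = T
      · rwa [hJT]
      · exact he J (by simpa [hJT] using hJ)
    · simp [sum_add_distrib, he_sum]
    · have hi_deg := he_deg i
      rw [multiDegree_add_single]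
      by_cases hi : i ∈ T
      · have := hT_pos i hi
        simp only [hi, if_true] at hi_deg ⊢
        omega
      · simpa [hi] using hi_deg

end Greedy

section PairsAndSingletons

variable {α : Type*} [Fintype α] [DecidableEq α] {d₁ d₂ : ℕ} {r : α → ℕ}

lemma two_mul_le_sum_min (h_total : 2 * d₁ ≤ ∑ i, r i)
    (h_erase : ∀ j, d₁ ≤ ∑ i ∈ univ.erase j, r i) : 2 * d₁ ≤ ∑ i, min (r i) d₁ := by
  by_cases h_sat : ∃ j, d₁ ≤ r j
  · obtain ⟨j, hj⟩ := h_sat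
    rw [← add_sum_erase univ _ (mem_univ j), min_eq_right hj]
    have := le_sum_min_of_le_sum _ _ (h_erase j)
    omega
  · push Not at h_sat
    rwa [sum_congr rfl fun i _ => min_eq_left (h_sat i).le]

theorem exists_pairs_and_singletons (h_total : 2 * d₁ + d₂ ≤ ∑ i, r i)
    (h_erase : ∀ j, d₁ ≤ ∑ i ∈ univ.erase j, r i) :
    ∃ e f : Finset α → ℕ, (∀ J, e J ≠ 0 → #J = 2) ∧ (∀ J, f J ≠ 0 → #J = 1) ∧
      ∑ J, e J = d₁ ∧ ∑ J, f J = d₂ ∧ ∀ i, multiDegree e i + multiDegree f i ≤ r i := by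
  obtain ⟨e, he, he_sum, he_deg⟩ :=
    exists_uniform_multiDegree_le (two_mul_le_sum_min (by omega) h_erase)
  have h_rest : d₂ ≤ ∑ i, (r i - multiDegree e i) := by
    rw [sum_tsub_distrib _ fun i _ => he_deg i, sum_multiDegree he, he_sum]
    omega
  obtain ⟨f, hf, hf_sum, hf_deg⟩ :=
    exists_uniform_multiDegree_le (k := 1) (r := fun i => r i - multiDegree e i)
      (by simpa using le_sum_min_of_le_sum _ _ h_rest)
  refine ⟨e, f, he, hf, he_sum, hf_sum, fun i => ?_⟩
  have := he_deg i
  have := hf_deg i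
  omega

end PairsAndSingletons

lemma generator_combination_eq {α : Type*} [Fintype α] [DecidableEq α] (a : α → ℕ)
    (b c : Finset α → ℕ) :
    (∑ i, (a i : ℤ) • ((0, 0, fun j => if j = i then (1:ℤ) else 0) : ℤ × ℤ × (α → ℤ)))
      + (∑ I, (b I : ℤ) • ((1, 0, fun j => if j ∈ I then (-1:ℤ) else 0) : ℤ × ℤ × (α → ℤ)))
      + (∑ J, (c J : ℤ) • ((0, 1, fun j => if j ∈ J then (-1:ℤ) else 0) : ℤ × ℤ × (α → ℤ)))
    = (∑ I, (b I : ℤ), ∑ J, (c J : ℤ),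
        fun j => (a j : ℤ) - multiDegree b j - multiDegree c j) := by
  refine Prod.ext ?_ (Prod.ext ?_ (funext fun j => ?_))
  · simp [Prod.fst_sum]
  · simp [Prod.snd_sum, Prod.fst_sum]
  · simp [Prod.snd_sum, Finset.sum_apply, multiDegree, sub_eq_add_neg, ← sum_neg_distrib,
      apply_ite (- · : ℤ → ℤ)]

lemma generator_combination_compl_eq {α : Type*} [Fintype α] [DecidableEq α] (a : α → ℕ)
    (e f : Finset α → ℕ) :
    (∑ i, (a i : ℤ) • ((0, 0, fun j => if j = i then (1:ℤ) else 0) : ℤ × ℤ × (α → ℤ)))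
      + (∑ I, ((e ∘ compl) I : ℤ) •
          ((1, 0, fun j => if j ∈ I then (-1:ℤ) else 0) : ℤ × ℤ × (α → ℤ)))
      + (∑ J, ((f ∘ compl) J : ℤ) •
          ((0, 1, fun j => if j ∈ J then (-1:ℤ) else 0) : ℤ × ℤ × (α → ℤ)))
    = (((∑ J, e J : ℕ) : ℤ), ((∑ J, f J : ℕ) : ℤ),
        fun j => ((a j + multiDegree e j + multiDegree f j : ℕ) : ℤ)
          - (∑ J, e J : ℕ) - (∑ J, f J : ℕ)) := by
  rw [generator_combination_eq, ← Nat.cast_sum, ← Nat.cast_sum, sum_comp_compl, sum_comp_compl]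
  refine Prod.ext rfl (Prod.ext rfl (funext fun j => ?_))
  have := multiDegree_comp_compl e j
  have := multiDegree_comp_compl f j
  dsimp only
  omega

theorem stmt5_general (n : ℕ) (d1 d2 : ℤ) (m : Fin (n+2) → ℤ)
    (h0 : 0 ≤ d1) (h0' : 0 ≤ d2)
    (h1 : ∀ i, m i ≤ d1 + d2)
    (h2 : ∀ I : Finset (Fin (n+2)), (I.card = n+1 ∨ I.card = n+2) →
      ∑ i ∈ I, m i ≤ (n : ℤ) * d1 + ((n : ℤ)+1) * d2) :
    ∃ (a : Fin (n+2) → ℕ) (b c : Finset (Fin (n+2)) → ℕ),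
      (∀ I, b I ≠ 0 → I.card = n) ∧ (∀ J, c J ≠ 0 → J.card = n+1) ∧
      ((d1, d2, fun i => -m i) : ℤ × ℤ × (Fin (n+2) → ℤ)) =
        (∑ i : Fin (n+2), (a i : ℤ) •
            ((0, 0, fun j => if j = i then (1:ℤ) else 0) : ℤ × ℤ × (Fin (n+2) → ℤ)))
      + (∑ I : Finset (Fin (n+2)), (b I : ℤ) •
            ((1, 0, fun j => if j ∈ I then (-1:ℤ) else 0) : ℤ × ℤ × (Fin (n+2) → ℤ)))
      + (∑ J : Finset (Fin (n+2)), (c J : ℤ) •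
            ((0, 1, fun j => if j ∈ J then (-1:ℤ) else 0) : ℤ × ℤ × (Fin (n+2) → ℤ))) := by
  lift d1 to ℕ using h0
  lift d2 to ℕ using h0'
  set r : Fin (n + 2) → ℕ := fun i => (d1 + d2 - m i).toNat
  have hr (i) : (r i : ℤ) = d1 + d2 - m i := Int.toNat_of_nonneg (by linarith [h1 i])
  have h_sum (I : Finset (Fin (n + 2))) (hI : #I = n + 1 ∨ #I = n + 2) :
      (#I : ℤ) * (d1 + d2) - (n * d1 + (n + 1) * d2) ≤ ((∑ i ∈ I, r i : ℕ) : ℤ) := by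
    have := h2 I hI
    push_cast [hr, sum_sub_distrib, sum_const, nsmul_eq_mul]
    linarith
  have h_total : 2 * d1 + d2 ≤ ∑ i, r i := by
    have := h_sum univ (.inr (by simp))
    simp only [card_univ, Fintype.card_fin] at this
    push_cast at this ⊢
    linarith
  have h_erase (j) : d1 ≤ ∑ i ∈ univ.erase j, r i := by
    have := h_sum (univ.erase j) (.inl (by simp))
    simp only [card_erase_of_mem (mem_univ j), card_univ, Fintype.card_fin] at this
    push_cast at this ⊢
    linarith
  obtain ⟨e, f, he, hf, he_sum, hf_sum, h_deg⟩ := exists_pairs_and_singletons h_total h_erase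
  refine ⟨fun i => r i - multiDegree e i - multiDegree f i, e ∘ compl, f ∘ compl,
    fun I hI => by simpa using card_eq_of_comp_compl_ne_zero he I hI,
    fun J hJ => by simpa using card_eq_of_comp_compl_ne_zero hf J hJ, ?_⟩
  rw [generator_combination_compl_eq, he_sum, hf_sum]
  refine Prod.ext rfl (Prod.ext rfl (funext fun j => ?_))
  have := h_deg j
  have := hr j
  dsimp only
  omega

theorem stmt5 (n : ℕ) (hn : 2 ≤ n) (d1 d2 : ℤ) (m : Fin (n+2) → ℤ)
    (h0 : 0 ≤ d1) (h0' : 0 ≤ d2)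
    (h1 : ∀ i, m i ≤ d1 + d2)
    (h2 : ∀ I : Finset (Fin (n+2)), (I.card = n+1 ∨ I.card = n+2) →
      ∑ i ∈ I, m i ≤ (n : ℤ) * d1 + ((n : ℤ)+1) * d2) :
    ∃ (a : Fin (n+2) → ℕ) (b c : Finset (Fin (n+2)) → ℕ),
      (∀ I, b I ≠ 0 → I.card = n) ∧ (∀ J, c J ≠ 0 → J.card = n+1) ∧
      ((d1, d2, fun i => -m i) : ℤ × ℤ × (Fin (n+2) → ℤ)) =
        (∑ i : Fin (n+2), (a i : ℤ) •
            ((0, 0, fun j => if j = i then (1:ℤ) else 0) : ℤ × ℤ × (Fin (n+2) → ℤ)))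
      + (∑ I : Finset (Fin (n+2)), (b I : ℤ) •
            ((1, 0, fun j => if j ∈ I then (-1:ℤ) else 0) : ℤ × ℤ × (Fin (n+2) → ℤ)))
      + (∑ J : Finset (Fin (n+2)), (c J : ℤ) •
            ((0, 1, fun j => if j ∈ J then (-1:ℤ) else 0) : ℤ × ℤ × (Fin (n+2) → ℤ))) :=
  stmt5_general n d1 d2 m h0 h0' h1 h2
end

section
/- Let $n \geq 2$, and suppose integers $d_1, d_2 \geq 0$ and $m_1, \ldots, m_{n+2} \geq 0$ satisfy $m_i \leq d_1 + d_2$ for all $i$ and $\sum_{i=1}^{n+2} m_i \leq n d_1 + (n+1) d_2$. Then there exist subsets $I_1, \ldots, I_{d_1} \subseteq \{1, \ldots, n+2\}$ each of size at most $n$, and subsets $J_1, \ldots, J_{d_2} \subseteq \{1, \ldots, n+2\}$ each of size at most $n+1$, such that each index $i$ belongs to exactly $m_i$ of the sets $I_1, \ldots, I_{d_1}, J_1, \ldots, J_{d_2}$. -/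
/-!
Write the `m i` copies of each index `i`, index after index, into a table with `D = d1 + d2`
columns filled row by row: the copies of `i` occupy the cells `block m i`, and cell `t` lies in
column `t % D`. Since `m i ≤ D`, an index occurs at most once in each column, and since
`∑ m i ≤ n * D + d2`, the table consists of at most `n` full rows and `d2` further cells. Hence
each of the first `d2` columns holds at most `n + 1` indices and each of the remaining `d1`
columns at most `n`: the first `d2` columns are the sets `J k`, the others the sets `I k`.
-/

open Finset

namespace TableFilling

section Blocks

variable {ι : Type*} [LinearOrder ι] [LocallyFiniteOrderBot ι] (m : ι → ℕ)

def start (i : ι) : ℕ := ∑ j ∈ Iio i, m j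

def block (i : ι) : Finset ℕ := Ico (start m i) (start m i + m i)

def columns (D : ℕ) (i : ι) : Finset ℕ := (block m i).image (· % D)

lemma start_add_eq_sum_Iic (i : ι) : start m i + m i = ∑ j ∈ Iic i, m j :=
  sum_Iio_add_eq_sum_Iic i

lemma start_add_le_start {i j : ι} (h : i < j) : start m i + m i ≤ start m j := by
  rw [start_add_eq_sum_Iic]
  exact sum_le_sum_of_subset fun _ hk => mem_Iio.2 ((mem_Iic.1 hk).trans_lt h)

lemma disjoint_block {i j : ι} (h : i ≠ j) : Disjoint (block m i) (block m j) := by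
  wlog hij : i < j generalizing i j
  · exact (this h.symm (h.lt_or_gt.resolve_left hij)).symm
  have := start_add_le_start m hij
  simp only [block, disjoint_left, mem_Ico]
  omega

lemma block_subset_range [Fintype ι] (i : ι) : block m i ⊆ range (∑ j, m j) := by
  have : start m i + m i ≤ ∑ j, m j := by
    rw [start_add_eq_sum_Iic]
    exact sum_le_sum_of_subset (subset_univ _)
  intro t ht
  simp only [block, mem_Ico, mem_range] at ht ⊢
  omega

variable {m} {D : ℕ}

lemma card_columns {i : ι} (h : m i ≤ D) : #(columns m D i) = m i := by
  rw [columns, card_image_of_injOn, block, Nat.card_Ico, Nat.add_sub_cancel_left]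
  exact (Nat.mod_injOn_Ico _ D).mono (coe_subset.2 (Ico_subset_Ico_right (by omega)))

lemma columns_subset_range {i : ι} (h : m i ≤ D) : columns m D i ⊆ range D := by
  simp only [columns, block, subset_iff, mem_image, mem_Ico, mem_range]
  rintro _ ⟨t, ht, rfl⟩
  exact Nat.mod_lt t (by omega)

lemma card_filter_mem_columns_le [Fintype ι] (c : ℕ) :
    #{i | c ∈ columns m D i} ≤ #{t ∈ range (∑ j, m j) | t % D = c} := by
  refine card_le_card_of_forall_subsingleton (fun i t => t ∈ block m i) ?_ ?_
  · simp only [mem_filter, mem_univ, true_and, columns, mem_image]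
    rintro i ⟨t, ht, rfl⟩
    exact ⟨t, ⟨block_subset_range m i ht, rfl⟩, ht⟩
  · intro t _ i hi j hj
    by_contra hij
    exact disjoint_left.1 (disjoint_block m hij) hi.2 hj.2

end Blocks

lemma card_filter_range_mod_eq_le {D c e : ℕ} (a : ℕ) (he : e ≤ D) :
    #{t ∈ range (a * D + e) | t % D = c} ≤ a + if c < e then 1 else 0 := by
  refine (card_le_card_of_injOn (· / D) (fun t ht => ?_) (fun s hs t ht hst => ?_)).trans
    (card_range _).le
  · simp only [coe_filter, Set.mem_ofPred_eq, mem_range, coe_range, Set.mem_Iio] at ht ⊢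
    have key : D * (t / D) + c < D * a + e := by rw [← ht.2, Nat.div_add_mod, mul_comm]; exact ht.1
    split_ifs with hce
    · exact Nat.lt_of_mul_lt_mul_left (a := D) (by rw [mul_add_one]; omega)
    · exact Nat.lt_of_mul_lt_mul_left (a := D) (by rw [add_zero]; omega)
  · simp only [coe_filter, Set.mem_ofPred_eq] at hs ht
    exact Nat.ext_div_modEq hst (hs.2.trans ht.2.symm)

lemma card_filter_fin_add_card_filter_fin {a b : ℕ} {s : Finset ℕ} (hs : s ⊆ range (a + b)) :
    #{k : Fin a | (k : ℕ) ∈ s} + #{k : Fin b | a + k ∈ s} = #s := by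
  have split := Fin.sum_univ_add (fun k : Fin (a + b) => if (k : ℕ) ∈ s then 1 else 0)
  simp only [Fin.val_castAdd, Fin.val_natAdd] at split
  rw [card_filter, card_filter, ← split,
    Fin.sum_univ_eq_sum_range (fun k => if k ∈ s then 1 else 0), sum_boole, Nat.cast_id,
    filter_mem_eq_inter, inter_eq_right.2 hs]

end TableFilling

open TableFilling

theorem stmt7_general (n d1 d2 : ℕ) (m : Fin (n+2) → ℕ)
    (h1 : ∀ i, m i ≤ d1 + d2)
    (h2 : ∑ i, m i ≤ n * d1 + (n+1) * d2) :
    ∃ (I : Fin d1 → Finset (Fin (n+2))) (J : Fin d2 → Finset (Fin (n+2))),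
      (∀ k, (I k).card ≤ n) ∧ (∀ k, (J k).card ≤ n+1) ∧
      ∀ i, (Finset.univ.filter (fun k => i ∈ I k)).card
           + (Finset.univ.filter (fun k => i ∈ J k)).card = m i := by
  set D := d2 + d1
  have hm : ∀ i, m i ≤ D := fun i => (h1 i).trans_eq (add_comm _ _)
  have htotal : ∑ i, m i ≤ n * D + d2 := h2.trans_eq (by ring)
  have hcol (c : ℕ) : #{i | c ∈ columns m D i} ≤ n + if c < d2 then 1 else 0 :=
    (card_filter_mem_columns_le c).trans <|
      (card_le_card (filter_subset_filter _ (range_subset_range.2 htotal))).trans <|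
        card_filter_range_mod_eq_le n (by omega)
  refine ⟨fun k => {i | d2 + k ∈ columns m D i}, fun k => {i | ↑k ∈ columns m D i},
    fun k => ?_, fun k => ?_, fun i => ?_⟩
  · simpa using hcol (d2 + k)
  · simpa [k.isLt] using hcol k
  · simp only [mem_filter, mem_univ, true_and]
    rw [add_comm, card_filter_fin_add_card_filter_fin (columns_subset_range (hm i)),
      card_columns (hm i)]

theorem stmt7 (n d1 d2 : ℕ) (hn : 2 ≤ n) (m : Fin (n+2) → ℕ)
    (h1 : ∀ i, m i ≤ d1 + d2)
    (h2 : ∑ i, m i ≤ n * d1 + (n+1) * d2) :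
    ∃ (I : Fin d1 → Finset (Fin (n+2))) (J : Fin d2 → Finset (Fin (n+2))),
      (∀ k, (I k).card ≤ n) ∧ (∀ k, (J k).card ≤ n+1) ∧
      ∀ i, (Finset.univ.filter (fun k => i ∈ I k)).card
           + (Finset.univ.filter (fun k => i ∈ J k)).card = m i :=
  stmt7_general n d1 d2 m h1 h2
end

section
/- Let $n \geq 2$, and suppose integers $d_1, d_2 \geq 0$ and $m_1, \ldots, m_{n+2} \geq 0$ satisfy: $m_i \leq d_1 + d_2$ for all $i$; $\sum_{i=1}^{n+2} m_i \leq n d_1 + (n+1) d_2$; $\sum_{i=1}^n m_i = (n-1) d_1 + n d_2$; and $m_i > d_2$ for all $i \in \{1, \ldots, n\}$. Then $m_{n+1} + m_{n+2} \leq d_1 + d_2$, and there exist subsets $I_1, \ldots, I_{d_1} \subseteq \{1, \ldots, n+2\}$ of size at most $n$ and $J_1, \ldots, J_{d_2} \subseteq \{1, \ldots, n+2\}$ of size at most $n+1$ such that each index $i$ lies in exactly $m_i$ of all the subsets, and no $I_k$ equals $\{1, \ldots, n\}$. -/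
open Finset

namespace Stmt8aux

variable {n : ℕ}

def A (n : ℕ) : Finset (Fin (n+2)) := univ.filter (fun i => (i : ℕ) < n)

def p (n : ℕ) : Fin (n+2) := ⟨n, by omega⟩
def q (n : ℕ) : Fin (n+2) := ⟨n+1, by omega⟩

lemma mem_A {i : Fin (n+2)} : i ∈ A n ↔ (i:ℕ) < n := by simp [A]

lemma p_not_mem_A : p n ∉ A n := by simp [A, p]
lemma q_not_mem_A : q n ∉ A n := by simp [A, q]
lemma p_ne_q : p n ≠ q n := by simp [p, q, Fin.ext_iff]

lemma tri (i : Fin (n+2)) : i ∈ A n ∨ i = p n ∨ i = q n := by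
  rcases lt_trichotomy (i:ℕ) n with h | h | h
  · exact Or.inl (mem_A.mpr h)
  · exact Or.inr (Or.inl (Fin.ext h))
  · have : (i:ℕ) = n+1 := by have := i.isLt; omega
    exact Or.inr (Or.inr (Fin.ext this))

lemma card_A : (A n).card = n := by
  have h : A n = univ \ {p n, q n} := by
    ext i
    simp [A, p, q, Fin.ext_iff]
    have := i.isLt
    omega
  rw [h, card_sdiff_of_subset (by simp)]
  rw [card_univ]
  rw [card_insert_of_notMem (by simp [p, q, Fin.ext_iff]), card_singleton]
  simp

lemma sum_split (m : Fin (n+2) → ℕ) :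
    ∑ i, m i = ∑ i ∈ A n, m i + (m (p n) + m (q n)) := by
  have h := Finset.sum_filter_add_sum_filter_not univ (fun i : Fin (n+2) => (i:ℕ) < n) m
  have h2 : univ.filter (fun i : Fin (n+2) => ¬ (i:ℕ) < n) = {p n, q n} := by
    ext i
    simp [p, q, Fin.ext_iff]
    have := i.isLt
    omega
  rw [h2, Finset.sum_pair p_ne_q] at h
  rw [← h]; rfl

lemma sum_dec (s S : Finset (Fin (n+2))) (m : Fin (n+2) → ℕ)
    (h : ∀ i ∈ s, i ∈ S → 1 ≤ m i) :
    ∑ i ∈ s, (if i ∈ S then m i - 1 else m i) + (s.filter (· ∈ S)).card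
      = ∑ i ∈ s, m i := by
  rw [Finset.card_filter, ← Finset.sum_add_distrib]
  apply Finset.sum_congr rfl
  intro i hi
  by_cases hiS : i ∈ S <;> simp [hiS]
  have := h i hi hiS; omega

lemma count_cons {d : ℕ} (S : Finset (Fin (n+2))) (I : Fin d → Finset (Fin (n+2))) (i : Fin (n+2)) :
    (univ.filter (fun k : Fin (d+1) => i ∈ (Fin.cons S I : Fin (d+1) → Finset (Fin (n+2))) k)).card
      = (if i ∈ S then 1 else 0) + (univ.filter (fun k => i ∈ I k)).card := by
  rw [Finset.card_filter, Finset.card_filter, Fin.sum_univ_succ]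
  simp only [Fin.cons_zero, Fin.cons_succ]


lemma auxD1 (n : ℕ) (hn : 2 ≤ n) : ∀ d1 (m : Fin (n+2) → ℕ),
    (∀ i, m i ≤ d1) → (∑ i, m i ≤ n * d1) →
    (∑ i ∈ A n, m i = (n-1) * d1) →
    ∃ I : Fin d1 → Finset (Fin (n+2)),
      (∀ k, (I k).card ≤ n) ∧
      (∀ i, (univ.filter (fun k => i ∈ I k)).card = m i) ∧
      (∀ k, I k ≠ A n) := by
  obtain ⟨nk, rfl⟩ : ∃ k, n = k + 2 := ⟨n - 2, by omega⟩
  set n := nk + 2 with hnn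
  have hn1 : n - 1 = nk + 1 := rfl
  intro d1
  induction d1 with
  | zero =>
    intro m h1 _ _
    refine ⟨fun _ => ∅, fun k => k.elim0, ?_, fun k => k.elim0⟩
    intro i
    have := h1 i
    simp only [Nat.le_zero] at this
    rw [this]
    simp
  | succ d1 ih =>
    intro m h1 h2 h3
    rw [hn1] at h3
    have hpq : m (p n) + m (q n) ≤ d1 + 1 := by
      have hs := sum_split (n := n) m
      have e2 : n * (d1+1) = n * d1 + n := by ring
      rw [hs, h3, e2] at h2
      have e1 : (nk+1) * (d1+1) = (nk+1) * d1 + (nk+1) := by ring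
      have e3 : (nk+1) * d1 + d1 = n * d1 := by rw [hnn]; ring
      linarith
    -- choose the subset t of A
    set B := (A n).filter (fun i => m i = d1 + 1) with hB
    set P := (A n).filter (fun i => 1 ≤ m i) with hPdef
    have hBP : B ⊆ P := by
      intro i hi
      rw [hB, Finset.mem_filter] at hi
      rw [hPdef, Finset.mem_filter]
      exact ⟨hi.1, by omega⟩
    have hcardB : B.card ≤ nk + 1 := by
      have h5 : B.card * (d1+1) ≤ (nk+1) * (d1+1) := by
        rw [← h3]
        calc B.card * (d1+1) = ∑ _i ∈ B, (d1+1) := by rw [Finset.sum_const, smul_eq_mul]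
          _ = ∑ i ∈ B, m i := by
              refine Finset.sum_congr rfl (fun i hi => ?_)
              rw [hB, Finset.mem_filter] at hi
              omega
          _ ≤ ∑ i ∈ A n, m i := Finset.sum_le_sum_of_subset (Finset.filter_subset _ _)
      exact Nat.le_of_mul_le_mul_right h5 (by omega)
    have hcardP : nk + 1 ≤ P.card := by
      have hsumP : ∑ i ∈ P, m i = (nk+1) * (d1+1) := by
        rw [← h3, hPdef]
        exact Finset.sum_filter_of_ne (fun x _ hx => by omega)
      have h5 : (nk+1) * (d1+1) ≤ P.card * (d1+1) := by
        rw [← hsumP]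
        calc ∑ i ∈ P, m i ≤ ∑ _i ∈ P, (d1+1) := Finset.sum_le_sum (fun i _ => h1 i)
          _ = P.card * (d1+1) := by rw [Finset.sum_const, smul_eq_mul]
      exact Nat.le_of_mul_le_mul_right h5 (by omega)
    obtain ⟨t, hBt, htP, htcard⟩ :=
      Finset.exists_subsuperset_card_eq hBP (n := nk + 1) (by omega) (by omega)
    have htc : t.card = nk + 1 := by omega
    have htA : t ⊆ A n := htP.trans (Finset.filter_subset _ _)
    have htpos : ∀ i ∈ t, 1 ≤ m i := by
      intro i hi
      have := htP hi
      rw [hPdef, Finset.mem_filter] at this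
      exact this.2
    have hnotB : ∀ i ∈ A n, i ∉ t → m i ≤ d1 := by
      intro i hiA hit
      have : i ∉ B := fun hb => hit (hBt hb)
      rw [hB, Finset.mem_filter] at this
      have h6 := h1 i
      have : ¬ m i = d1 + 1 := fun he => this ⟨hiA, he⟩
      omega
    -- build S
    obtain ⟨S, hS1, hS2, hS3, hS4, hS5⟩ :
        ∃ S : Finset (Fin (n+2)), S.card ≤ n ∧ ((A n).filter (· ∈ S)) = t ∧
          (∀ i ∈ S, 1 ≤ m i) ∧ (∀ i, i ∉ S → m i ≤ d1) ∧
          ∑ i, m i ≤ n * d1 + S.card := by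
      have hfilt : ∀ r : Fin (n+2), r ∉ A n →
          ((A n).filter (· ∈ insert r t)) = t := by
        intro r hr
        ext i
        simp only [Finset.mem_filter, Finset.mem_insert]
        constructor
        · rintro ⟨hiA, rfl | hit⟩
          · exact absurd hiA hr
          · exact hit
        · intro hit; exact ⟨htA hit, Or.inr hit⟩
      have hfilt0 : ((A n).filter (· ∈ t)) = t := by
        rw [Finset.filter_mem_eq_inter]
        exact Finset.inter_eq_right.mpr htA
      have hsum_eq := sum_split (n := n) m
      by_cases hz : m (p n) = 0 ∧ m (q n) = 0
      · refine ⟨t, by omega, hfilt0, htpos, ?_, ?_⟩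
        · intro i hit
          rcases tri i with hiA | rfl | rfl
          · exact hnotB i hiA hit
          · omega
          · omega
        · rw [hsum_eq, h3, hz.1, hz.2, htc]
          have e1 : (nk+1) * (d1+1) = (nk+1) * d1 + (nk+1) := by ring
          have e3 : (nk+1) * d1 + d1 = n * d1 := by rw [hnn]; ring
          linarith
      · have hins : ∀ r : Fin (n+2), r ∉ A n → (insert r t).card = n := by
          intro r hr
          rw [Finset.card_insert_of_notMem (fun h => hr (htA h)), htc]
        by_cases hle : m (q n) ≤ m (p n)
        · refine ⟨insert (p n) t, by rw [hins _ p_not_mem_A],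
            hfilt _ p_not_mem_A, ?_, ?_, ?_⟩
          · intro i hi
            rcases Finset.mem_insert.mp hi with rfl | hit
            · omega
            · exact htpos i hit
          · intro i hiS
            rcases tri i with hiA | rfl | rfl
            · exact hnotB i hiA (fun h => hiS (Finset.mem_insert_of_mem h))
            · exact absurd (Finset.mem_insert_self _ _) hiS
            · omega
          · rw [hsum_eq, h3, hins _ p_not_mem_A]
            have e1 : (nk+1) * (d1+1) = (nk+1) * d1 + (nk+1) := by ring
            have e3 : (nk+1) * d1 + d1 = n * d1 := by rw [hnn]; ring
            linarith
        · refine ⟨insert (q n) t, by rw [hins _ q_not_mem_A],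
            hfilt _ q_not_mem_A, ?_, ?_, ?_⟩
          · intro i hi
            rcases Finset.mem_insert.mp hi with rfl | hit
            · omega
            · exact htpos i hit
          · intro i hiS
            rcases tri i with hiA | rfl | rfl
            · exact hnotB i hiA (fun h => hiS (Finset.mem_insert_of_mem h))
            · omega
            · exact absurd (Finset.mem_insert_self _ _) hiS
          · rw [hsum_eq, h3, hins _ q_not_mem_A]
            have e1 : (nk+1) * (d1+1) = (nk+1) * d1 + (nk+1) := by ring
            have e3 : (nk+1) * d1 + d1 = n * d1 := by rw [hnn]; ring
            linarith
    -- S ≠ A n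
    have hSne : S ≠ A n := by
      intro h
      have : ((A n).filter (· ∈ S)) = A n := by
        rw [h]
        exact Finset.filter_true_of_mem (fun i hi => hi)
      rw [hS2] at this
      have := congrArg Finset.card this
      rw [htc, card_A] at this
      omega
    -- new multiplicity function
    set m' : Fin (n+2) → ℕ := fun i => if i ∈ S then m i - 1 else m i with hm'
    have hd1 := sum_dec univ S m (fun i _ hiS => hS3 i hiS)
    have hd2 := sum_dec (A n) S m (fun i _ hiS => hS3 i hiS)
    rw [Finset.filter_mem_eq_inter, Finset.univ_inter] at hd1
    rw [hS2, htc, h3] at hd2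
    obtain ⟨I', hI1, hI2, hI3⟩ := ih m'
      (by
        intro i
        rw [hm']
        by_cases hiS : i ∈ S
        · have := h1 i; simp only [hiS, if_true]; omega
        · simp only [hiS, if_false]; exact hS4 i hiS)
      (by
        simp only [hm']
        linarith [hd1, hS5])
      (by
        simp only [hm', hn1]
        have e1 : (nk+1) * (d1+1) = (nk+1) * d1 + (nk+1) := by ring
        linarith [hd2])
    refine ⟨Fin.cons S I', ?_, ?_, ?_⟩
    · intro k
      refine Fin.cases ?_ ?_ k
      · simpa using hS1
      · intro j; simpa using hI1 j
    · intro i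
      rw [count_cons, hI2 i, hm']
      by_cases hiS : i ∈ S
      · have := hS3 i hiS
        simp only [hiS, if_true]
        omega
      · simp only [hiS, if_false]; omega
    · intro k
      refine Fin.cases ?_ ?_ k
      · simpa using hSne
      · intro j; simpa using hI3 j


lemma auxD2 (n : ℕ) (hn : 2 ≤ n) : ∀ d2 d1 (m : Fin (n+2) → ℕ),
    (∀ i, m i ≤ d1 + d2) → (∑ i, m i ≤ n * d1 + (n+1) * d2) →
    (∑ i ∈ A n, m i = (n-1) * d1 + n * d2) →
    (∀ i : Fin (n+2), (i : ℕ) < n → d2 < m i) →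
    ∃ (I : Fin d1 → Finset (Fin (n+2))) (J : Fin d2 → Finset (Fin (n+2))),
      (∀ k, (I k).card ≤ n) ∧ (∀ k, (J k).card ≤ n+1) ∧
      (∀ i, (univ.filter (fun k => i ∈ I k)).card
           + (univ.filter (fun k => i ∈ J k)).card = m i) ∧
      (∀ k, I k ≠ A n) := by
  obtain ⟨nk, rfl⟩ : ∃ k, n = k + 2 := ⟨n - 2, by omega⟩
  set n := nk + 2 with hnn
  have hn1 : n - 1 = nk + 1 := rfl
  intro d2
  induction d2 with
  | zero =>
    intro d1 m h1 h2 h3 _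
    obtain ⟨I, hI1, hI2, hI3⟩ := auxD1 n hn d1 m
      (by intro i; have := h1 i; omega)
      (by simpa using h2)
      (by simpa using h3)
    exact ⟨I, fun _ => ∅, hI1, fun k => k.elim0, fun i => by rw [hI2 i]; simp, hI3⟩
  | succ d2 ih =>
    intro d1 m h1 h2 h3 h4
    rw [hn1] at h3
    have hApos : ∀ i ∈ A n, 1 ≤ m i := by
      intro i hi
      have := h4 i (mem_A.mp hi)
      omega
    have hpq : m (p n) + m (q n) ≤ d1 + (d2 + 1) := by
      have hs := sum_split (n := n) m
      have e1 : (nk+1) * d1 + d1 = n * d1 := by rw [hnn]; ring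
      have e2 : n * (d2+1) = n * d2 + n := by ring
      have e3 : (n+1) * (d2+1) = (n+1) * d2 + (n+1) := by ring
      have e4 : n * d2 + d2 = (n+1) * d2 := by ring
      linarith [hs, h2, h3]
    -- build S
    obtain ⟨S, hS1, hS2, hS3, hS4, hS5⟩ :
        ∃ S : Finset (Fin (n+2)), S.card ≤ n + 1 ∧ ((A n).filter (· ∈ S)) = A n ∧
          (∀ i ∈ S, 1 ≤ m i) ∧ (∀ i, i ∉ S → m i ≤ d1 + d2) ∧
          ∑ i, m i ≤ n * d1 + (n+1) * d2 + S.card := by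
      have hfilt : ∀ r : Fin (n+2), ((A n).filter (· ∈ insert r (A n))) = A n := by
        intro r
        refine Finset.filter_true_of_mem (fun i hi => Finset.mem_insert_of_mem hi)
      have hfilt0 : ((A n).filter (· ∈ A n)) = A n :=
        Finset.filter_true_of_mem (fun i hi => hi)
      have hsum_eq := sum_split (n := n) m
      have hcard_ins : ∀ r : Fin (n+2), r ∉ A n → (insert r (A n)).card = n + 1 := by
        intro r hr
        rw [Finset.card_insert_of_notMem hr, card_A]
      have e2 : (n+1) * (d2+1) = (n+1) * d2 + (n+1) := by ring
      by_cases hz : m (p n) = 0 ∧ m (q n) = 0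
      · refine ⟨A n, by rw [card_A]; omega, hfilt0, hApos, ?_, ?_⟩
        · intro i hit
          rcases tri i with hiA | rfl | rfl
          · exact absurd hiA hit
          · omega
          · omega
        · rw [hsum_eq, h3, hz.1, hz.2, card_A]
          have e1 : (nk+1) * d1 + d1 = n * d1 := by rw [hnn]; ring
          have e4 : n * d2 + d2 = (n+1) * d2 := by ring
          linarith
      · by_cases hle : m (q n) ≤ m (p n)
        · refine ⟨insert (p n) (A n), by rw [hcard_ins _ p_not_mem_A],
            hfilt _, ?_, ?_, ?_⟩
          · intro i hi
            rcases Finset.mem_insert.mp hi with rfl | hit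
            · omega
            · exact hApos i hit
          · intro i hiS
            rcases tri i with hiA | rfl | rfl
            · exact absurd (Finset.mem_insert_of_mem hiA) hiS
            · exact absurd (Finset.mem_insert_self _ _) hiS
            · omega
          · rw [hsum_eq, h3, hcard_ins _ p_not_mem_A]
            linarith
        · refine ⟨insert (q n) (A n), by rw [hcard_ins _ q_not_mem_A],
            hfilt _, ?_, ?_, ?_⟩
          · intro i hi
            rcases Finset.mem_insert.mp hi with rfl | hit
            · omega
            · exact hApos i hit
          · intro i hiS
            rcases tri i with hiA | rfl | rfl
            · exact absurd (Finset.mem_insert_of_mem hiA) hiS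
            · omega
            · exact absurd (Finset.mem_insert_self _ _) hiS
          · rw [hsum_eq, h3, hcard_ins _ q_not_mem_A]
            linarith
    -- new multiplicity function
    set m' : Fin (n+2) → ℕ := fun i => if i ∈ S then m i - 1 else m i with hm'
    have hASub : A n ⊆ S := by
      intro i hi
      rw [← hS2] at hi
      exact (Finset.mem_filter.mp hi).2
    have hd1 := sum_dec univ S m (fun i _ hiS => hS3 i hiS)
    have hd2' := sum_dec (A n) S m (fun i _ hiS => hS3 i hiS)
    rw [Finset.filter_mem_eq_inter, Finset.univ_inter] at hd1
    rw [hS2, card_A, h3] at hd2'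
    obtain ⟨I, J', hI1, hJ1, hC, hne⟩ := ih d1 m'
      (by
        intro i
        rw [hm']
        by_cases hiS : i ∈ S
        · have := h1 i; simp only [hiS, if_true]; omega
        · simp only [hiS, if_false]; exact hS4 i hiS)
      (by
        simp only [hm']
        linarith [hd1, hS5])
      (by
        simp only [hm', hn1]
        have e4 : n * d2 + n = n * (d2 + 1) := by ring
        have e5 : (nk+1) * d1 + n * (d2+1) + n = (nk+1) * d1 + n * d2 + 2 * n := by ring
        linarith [hd2'])
      (by
        intro i hi
        have := h4 i hi
        have hiS : i ∈ S := hASub (mem_A.mpr hi)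
        simp only [hm', hiS, if_true]
        omega)
    refine ⟨I, Fin.cons S J', hI1, ?_, ?_, hne⟩
    · intro k
      refine Fin.cases ?_ ?_ k
      · simpa using hS1
      · intro j; simpa using hJ1 j
    · intro i
      rw [count_cons]
      have hci := hC i
      simp only [hm'] at hci
      by_cases hiS : i ∈ S
      · simp only [hiS, if_true] at hci ⊢
        have h6 := hS3 i hiS
        omega
      · simp only [hiS, if_false] at hci ⊢
        omega

end Stmt8aux

theorem stmt8 (n d1 d2 : ℕ) (hn : 2 ≤ n) (m : Fin (n+2) → ℕ)
    (h1 : ∀ i, m i ≤ d1 + d2)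
    (h2 : ∑ i, m i ≤ n * d1 + (n+1) * d2)
    (h3 : ∑ i ∈ Finset.univ.filter (fun i : Fin (n+2) => (i : ℕ) < n), m i
            = (n-1) * d1 + n * d2)
    (h4 : ∀ i : Fin (n+2), (i : ℕ) < n → d2 < m i) :
    m ⟨n, by omega⟩ + m ⟨n+1, by omega⟩ ≤ d1 + d2 ∧
    ∃ (I : Fin d1 → Finset (Fin (n+2))) (J : Fin d2 → Finset (Fin (n+2))),
      (∀ k, (I k).card ≤ n) ∧ (∀ k, (J k).card ≤ n+1) ∧
      (∀ i, (Finset.univ.filter (fun k => i ∈ I k)).card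
           + (Finset.univ.filter (fun k => i ∈ J k)).card = m i) ∧
      ∀ k, I k ≠ Finset.univ.filter (fun i : Fin (n+2) => (i : ℕ) < n) := by
  have h3' : ∑ i ∈ Stmt8aux.A n, m i = (n-1) * d1 + n * d2 := h3
  constructor
  · have hs := Stmt8aux.sum_split (n := n) m
    have e1 : (n-1) * d1 + d1 = n * d1 := by
      have h : n - 1 + 1 = n := by omega
      calc (n-1) * d1 + d1 = (n-1+1) * d1 := by ring
        _ = n * d1 := by rw [h]
    have e2 : n * d2 + d2 = (n+1) * d2 := by ring
    have : m (Stmt8aux.p n) + m (Stmt8aux.q n) ≤ d1 + d2 := by linarith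
    exact this
  · obtain ⟨I, J, hI1, hJ1, hC, hne⟩ := Stmt8aux.auxD2 n hn d2 d1 m h1 h2 h3' h4
    exact ⟨I, J, hI1, hJ1, hC, hne⟩
end

section
/- Let $n \geq 2$, $t \geq 1$, and let $I \subseteq \{1, \ldots, n+3\}$ with $|I| = n - 2t \geq 0$. Suppose nonnegative integers $d_1, d_2, m_1, \ldots, m_{n+3}$ satisfy the effectivity conditions $m_i \leq d_1 + d_2$ for all $i$ and $\sum_{i \in S} m_i \leq n d_1 + (n+1) d_2$ for every $S \subseteq \{1, \ldots, n+3\}$ with $|S| = n+2$. If there exists $j \in I$ with $m_j \leq d_2$, then $(t+1) \sum_{i \in I} m_i + t \sum_{i \notin I} m_i \leq ((n+1)t + |I| - 1) d_1 + ((n+3)t + |I|) d_2$. -/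
/-!
The sum over `I` is at most `m j + (|I| - 1)(d₁ + d₂) ≤ (|I| - 1) d₁ + |I| d₂`. Applying the
second effectivity condition to the complement of `{j}`, together with `m j ≤ d₁ + d₂`, bounds
the total sum by `(n + 1) d₁ + (n + 2) d₂`. The left-hand side is the sum over `I` plus `t`
times the total sum, and the slack `t d₂ ≥ 0` absorbs the rest.
-/

open Finset

theorem Finset.sum_le_of_mem_le_of_le_add {ι R : Type*} [DecidableEq ι] [CommRing R]
    [LinearOrder R] [IsStrictOrderedRing R] {s : Finset ι} {f : ι → R} {j : ι} {a b : R}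
    (hj : j ∈ s) (hfj : f j ≤ b) (hf : ∀ i ∈ s, f i ≤ a + b) :
    ∑ i ∈ s, f i ≤ ((#s : R) - 1) * a + #s * b := by
  have hrest : ∑ i ∈ s.erase j, f i ≤ #(s.erase j) • (a + b) :=
    sum_le_card_nsmul _ _ _ fun i hi => hf i (mem_of_mem_erase hi)
  have hcard : ((#(s.erase j) : ℕ) : R) = #s - 1 := by
    rw [card_erase_of_mem hj, Nat.cast_pred (card_pos.mpr ⟨j, hj⟩)]
  rw [nsmul_eq_mul, hcard] at hrest
  rw [← add_sum_erase s f hj]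
  linarith

theorem stmt9_general (n t : ℕ)
    (I : Finset (Fin (n+3)))
    (d1 d2 : ℤ) (m : Fin (n+3) → ℤ)
    (hd2 : 0 ≤ d2)
    (heff1 : ∀ i, m i ≤ d1 + d2)
    (heff2 : ∀ S : Finset (Fin (n+3)), S.card = n+2 →
      ∑ i ∈ S, m i ≤ (n : ℤ) * d1 + ((n : ℤ)+1) * d2)
    (hj : ∃ j ∈ I, m j ≤ d2) :
    ((t : ℤ)+1) * ∑ i ∈ I, m i + (t : ℤ) * ∑ i ∈ Iᶜ, m i ≤
      (((n : ℤ)+1) * t + (I.card : ℤ) - 1) * d1 + (((n : ℤ)+3) * t + (I.card : ℤ)) * d2 := by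
  obtain ⟨j, hjI, hjm⟩ := hj
  have hsumI : ∑ i ∈ I, m i ≤ ((#I : ℤ) - 1) * d1 + #I * d2 :=
    sum_le_of_mem_le_of_le_add hjI hjm fun i _ => heff1 i
  have htotal : ∑ i, m i ≤ ((n : ℤ) + 1) * d1 + ((n : ℤ) + 2) * d2 := by
    have hcompl := heff2 {j}ᶜ (by simp [card_compl])
    rw [Fintype.sum_eq_add_sum_compl j]
    linarith [heff1 j]
  rw [← sum_add_sum_compl I m] at htotal
  have ht : (0 : ℤ) ≤ t := t.cast_nonneg
  linarith [mul_le_mul_of_nonneg_left htotal ht, mul_nonneg ht hd2]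

theorem stmt9 (n t : ℕ) (hn : 2 ≤ n) (ht : 1 ≤ t) (htn : 2*t ≤ n)
    (I : Finset (Fin (n+3))) (hI : I.card = n - 2*t)
    (d1 d2 : ℤ) (m : Fin (n+3) → ℤ)
    (hd1 : 0 ≤ d1) (hd2 : 0 ≤ d2) (hm : ∀ i, 0 ≤ m i)
    (heff1 : ∀ i, m i ≤ d1 + d2)
    (heff2 : ∀ S : Finset (Fin (n+3)), S.card = n+2 →
      ∑ i ∈ S, m i ≤ (n : ℤ) * d1 + ((n : ℤ)+1) * d2)
    (hj : ∃ j ∈ I, m j ≤ d2) :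
    ((t : ℤ)+1) * ∑ i ∈ I, m i + (t : ℤ) * ∑ i ∈ Iᶜ, m i ≤
      (((n : ℤ)+1) * t + (I.card : ℤ) - 1) * d1 + (((n : ℤ)+3) * t + (I.card : ℤ)) * d2 :=
  stmt9_general n t I d1 d2 m hd2 heff1 heff2 hj
end

section
/- Let $n \geq 2$, $t \geq 1$, and let $I \subseteq \{1, \ldots, n+3\}$ with $|I| = n - 2t \geq 0$. Suppose nonnegative integers $d_1, d_2, m_1, \ldots, m_{n+3}$ satisfy $m_i \leq d_1 + d_2$ for all $i$ and $\sum_{i \in S} m_i \leq n d_1 + (n+1) d_2$ for every subset $S$ of size $n+2$. If there exists $j \notin I$ with $m_j \leq d_2$, then $(t+1) \sum_{i \in I} m_i + t \sum_{i \notin I} m_i \leq ((n+1)t + |I| - 1) d_1 + ((n+3)t + |I|) d_2$. -/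
open Finset

/-! Dropping the index `j` with `m j ≤ d₂` from the `(n+2)`-subset bound gives
`∑ m ≤ n d₁ + (n+2) d₂`. The left-hand side is `t ∑ m + ∑_{i ∈ I} m i`, and the bound
`m i ≤ d₁ + d₂` on `I` leaves a slack of `(t-1) d₁ + t d₂ ≥ 0`. -/

theorem Finset.sum_le_add_of_sum_compl_singleton_le {ι M : Type*} [Fintype ι] [DecidableEq ι]
    [AddCommMonoid M] [PartialOrder M] [IsOrderedAddMonoid M] {f : ι → M} {j : ι} {a b : M}
    (hcompl : ∑ i ∈ {j}ᶜ, f i ≤ a) (hj : f j ≤ b) : ∑ i, f i ≤ a + b := by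
  rw [← sum_compl_add_sum {j} f, sum_singleton]
  exact add_le_add hcompl hj

theorem Finset.add_one_mul_sum_add_mul_sum_compl {ι R : Type*} [Fintype ι] [DecidableEq ι]
    [CommRing R] (s : Finset ι) (f : ι → R) (t : R) :
    (t + 1) * ∑ i ∈ s, f i + t * ∑ i ∈ sᶜ, f i = t * ∑ i, f i + ∑ i ∈ s, f i := by
  rw [← sum_add_sum_compl s f]
  ring

theorem stmt10_general (n t : ℕ) (ht : 1 ≤ t)
    (I : Finset (Fin (n+3)))
    (d1 d2 : ℤ) (m : Fin (n+3) → ℤ)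
    (hd1 : 0 ≤ d1) (hd2 : 0 ≤ d2)
    (heff1 : ∀ i, m i ≤ d1 + d2)
    (heff2 : ∀ S : Finset (Fin (n+3)), S.card = n+2 →
      ∑ i ∈ S, m i ≤ (n : ℤ) * d1 + ((n : ℤ)+1) * d2)
    (hj : ∃ j, j ∉ I ∧ m j ≤ d2) :
    ((t : ℤ)+1) * ∑ i ∈ I, m i + (t : ℤ) * ∑ i ∈ Iᶜ, m i ≤
      (((n : ℤ)+1) * t + (I.card : ℤ) - 1) * d1 + (((n : ℤ)+3) * t + (I.card : ℤ)) * d2 := by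
  obtain ⟨j, -, hmj⟩ := hj
  have htotal : ∑ i, m i ≤ (n : ℤ) * d1 + ((n : ℤ) + 1) * d2 + d2 :=
    sum_le_add_of_sum_compl_singleton_le (heff2 _ (by simp [card_compl])) hmj
  have hsumI : ∑ i ∈ I, m i ≤ (I.card : ℤ) * (d1 + d2) := by
    simpa using sum_le_card_nsmul I m _ fun i _ => heff1 i
  have ht' : (1 : ℤ) ≤ t := by exact_mod_cast ht
  rw [add_one_mul_sum_add_mul_sum_compl]
  calc (t : ℤ) * ∑ i, m i + ∑ i ∈ I, m i
      ≤ t * ((n : ℤ) * d1 + ((n : ℤ) + 1) * d2 + d2) + (I.card : ℤ) * (d1 + d2) :=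
        add_le_add (mul_le_mul_of_nonneg_left htotal (by positivity)) hsumI
    _ ≤ _ := by
      linear_combination mul_nonneg (sub_nonneg.2 ht') hd1 + mul_nonneg (zero_le_one.trans ht') hd2

theorem stmt10 (n t : ℕ) (hn : 2 ≤ n) (ht : 1 ≤ t) (htn : 2*t ≤ n)
    (I : Finset (Fin (n+3))) (hI : I.card = n - 2*t)
    (d1 d2 : ℤ) (m : Fin (n+3) → ℤ)
    (hd1 : 0 ≤ d1) (hd2 : 0 ≤ d2) (hm : ∀ i, 0 ≤ m i)
    (heff1 : ∀ i, m i ≤ d1 + d2)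
    (heff2 : ∀ S : Finset (Fin (n+3)), S.card = n+2 →
      ∑ i ∈ S, m i ≤ (n : ℤ) * d1 + ((n : ℤ)+1) * d2)
    (hj : ∃ j, j ∉ I ∧ m j ≤ d2) :
    ((t : ℤ)+1) * ∑ i ∈ I, m i + (t : ℤ) * ∑ i ∈ Iᶜ, m i ≤
      (((n : ℤ)+1) * t + (I.card : ℤ) - 1) * d1 + (((n : ℤ)+3) * t + (I.card : ℤ)) * d2 :=
  stmt10_general n t ht I d1 d2 m hd1 hd2 heff1 heff2 hj
end
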